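/- Assume that for all f with k ≤ deg f ≤ q-1, d(u_f, RS(q,k)) = q-k implies deg f = k (the deep hole conjecture for RS(q,k)). Then for q odd and 2 ≤ k ≤ q-2, the covering radius of PRS(q+1,k) equals q - k, and every word (u_f, v) with deg f = k and v ∈ F_q is a deep hole of PRS(q+1,k). -/

import Mathlib

open Polynomial

/-- Error distance of a word `u` to a code `C`: minimum Hamming distance to a codeword. -/
noncomputable def errDist {ι F : Type*} [Fintype ι] [DecidableEq F]
    (C : Set (ι → F)) (u : ι → F) : ℕ :=
  sInf (hammingDist u '' C)

/-- Covering radius of a code: maximum error distance over all words. -/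
noncomputable def covRad {ι F : Type*} [Fintype ι] [DecidableEq F]
    (C : Set (ι → F)) : ℕ :=
  sSup (Set.range (errDist C))

/-- Minimum distance of a code: minimum Hamming weight of a nonzero codeword. -/
noncomputable def minDist {ι F : Type*} [Fintype ι] [DecidableEq F] [Zero F]
    (C : Set (ι → F)) : ℕ :=
  sInf (hammingNorm '' (C \ {0}))

/-- Reed-Solomon code: evaluations of polynomials of degree `< k` at the points `x i`. -/
def RSCode (F : Type*) [Field F] {ι : Type*} (x : ι → F) (k : ℕ) : Set (ι → F) :=
  {u | ∃ f : F[X], f.degree < (k : WithBot ℕ) ∧ ∀ i, u i = f.eval (x i)}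

/-- Projective Reed-Solomon code of length `q+1` (words indexed by `Option F`,
with `none` the point at infinity carrying the coefficient of `X^(k-1)`). -/
def PRSCode (F : Type*) [Field F] (k : ℕ) : Set (Option F → F) :=
  {w | ∃ g : F[X], g.degree < (k : WithBot ℕ) ∧
    (∀ a : F, w (some a) = g.eval a) ∧ w none = g.coeff (k - 1)}

/-!
The words `(u_f, v)` with `deg f = k` are at distance at least `q - k` from every codeword, since
`f - g` has at most `k` roots. They are also at distance exactly `q - k`: for a `k`-set `T ⊆ F`
whose sum is prescribed, `g = f - lc(f) ∏_{t ∈ T} (X - t)` has degree `< k`, agrees with `f` on `T`,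
and has `X^(k-1)`-coefficient `f_{k-1} + lc(f) ∑ T`, which can be made equal to `v` because in
odd characteristic every element of `F` is a sum of `k` distinct elements for `2 ≤ k ≤ q - 2`.
Conversely, for an arbitrary word `w = (u, v)` with `u = u_h`, `deg h ≤ q - 1`, either
`d(u, RS(q,k)) < q - k`, and then `d(w, PRS(q+1,k)) ≤ d(u, RS(q,k)) + 1 ≤ q - k`, or `u` is a deep
hole of `RS(q,k)`, and then the conjecture gives `deg h = k`, so that `w` is one of the words above.
-/

open Finset

section SubsetSum

variable {F : Type*} [Field F] [Fintype F] [DecidableEq F]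

theorem exists_disjoint_finset_card_eq_sum_eq (h2 : (2 : F) ≠ 0) {k : ℕ} (hk : 2 ≤ k)
    {A : Finset F} (hA : 2 * k + 2 * #A ≤ Fintype.card F + 2) (s : F) :
    ∃ T : Finset F, #T = k ∧ Disjoint T A ∧ ∑ x ∈ T, x = s := by
  induction k, hk using Nat.le_induction generalizing A s with
  | base =>
    obtain ⟨x, -, hx⟩ : ∃ x ∈ univ, x ∉ A ∪ A.image (s - ·) ∪ {s / 2} := by
      refine exists_mem_notMem_of_card_lt_card ?_
      have := card_union_le (A ∪ A.image (s - ·)) {s / 2}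
      have := card_union_le A (A.image (s - ·))
      have := card_image_le (s := A) (f := (s - ·))
      rw [card_univ, card_singleton] at *
      omega
    simp only [mem_union, mem_image, mem_singleton, not_or, not_exists, not_and] at hx
    obtain ⟨⟨hxA, hsxA⟩, hxs⟩ := hx
    have hne : x ≠ s - x := fun h => hxs (eq_div_of_mul_eq h2 (by linear_combination h))
    refine ⟨{x, s - x}, card_pair hne, ?_, by rw [sum_pair hne]; ring⟩
    rw [disjoint_insert_left, disjoint_singleton_left]
    exact ⟨hxA, fun h => hsxA _ h (by ring)⟩
  | succ k hk ih =>
    obtain ⟨x, -, hxA⟩ : ∃ x ∈ univ, x ∉ A :=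
      exists_mem_notMem_of_card_lt_card (by rw [card_univ]; omega)
    obtain ⟨T, hT, hTA, hTs⟩ :=
      ih (A := insert x A) (by have := card_insert_le x A; omega) (s - x)
    have hxT : x ∉ T := disjoint_right.1 hTA (mem_insert_self x A)
    refine ⟨insert x T, by rw [card_insert_of_notMem hxT, hT], ?_,
      by rw [sum_insert hxT, hTs]; ring⟩
    exact disjoint_insert_left.2 ⟨hxA, hTA.mono_right (subset_insert x A)⟩

theorem exists_finset_card_eq_sum_eq (h2 : (2 : F) ≠ 0) {k : ℕ} (hk2 : 2 ≤ k)
    (hk : k ≤ Fintype.card F - 2) (s : F) :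
    ∃ T : Finset F, #T = k ∧ ∑ x ∈ T, x = s := by
  by_cases hsmall : 2 * k ≤ Fintype.card F + 2
  · obtain ⟨T, hT, -, hTs⟩ :=
      exists_disjoint_finset_card_eq_sum_eq h2 hk2 (A := ∅) (by simpa using hsmall) s
    exact ⟨T, hT, hTs⟩
  · -- take the complement of a `(q - k)`-set summing to `-s`
    obtain ⟨T, hT, -, hTs⟩ := exists_disjoint_finset_card_eq_sum_eq h2
      (k := Fintype.card F - k) (by omega) (A := ∅) (by simp only [card_empty]; omega) (-s)
    have hsum : ∑ x : F, x = 0 := by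
      simpa using FiniteField.sum_pow_lt_card_sub_one F 1 (by omega)
    refine ⟨Tᶜ, by rw [card_compl, hT]; omega, ?_⟩
    linear_combination sum_compl_add_sum T (fun x => x) - hTs + hsum

end SubsetSum

section HammingDist

variable {ι β : Type*} [Fintype ι] [DecidableEq β]

theorem hammingDist_le_card_sub_card_of_eqOn {x y : ι → β} {S : Finset ι}
    (h : Set.EqOn x y S) : hammingDist x y ≤ Fintype.card ι - #S := by
  classical
  rw [← card_compl]
  exact card_le_card fun i hi => mem_compl.2 fun hiS => (mem_filter.1 hi).2 (h hiS)

theorem hammingDist_option {α : Type*} [Fintype α] (x y : Option α → β) :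
    hammingDist x y = hammingDist (x ∘ some) (y ∘ some) + if x none = y none then 0 else 1 := by
  simp only [hammingDist, card_filter, Fintype.sum_option, Function.comp_apply, ite_not]
  ring

end HammingDist

section ErrDist

variable {ι β : Type*} [Fintype ι] [DecidableEq β] {C : Set (ι → β)} {u c : ι → β} {n : ℕ}

theorem errDist_le_hammingDist (hc : c ∈ C) : errDist C u ≤ hammingDist u c :=
  Nat.sInf_le ⟨c, hc, rfl⟩

theorem errDist_eq_zero_of_mem (hu : u ∈ C) : errDist C u = 0 :=
  Nat.le_zero.1 <| (errDist_le_hammingDist hu).trans_eq (hammingDist_self u)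

theorem le_errDist (hC : C.Nonempty) (h : ∀ c ∈ C, n ≤ hammingDist u c) : n ≤ errDist C u :=
  le_csInf (hC.image _) (by rintro _ ⟨c, hc, rfl⟩; exact h c hc)

theorem exists_hammingDist_eq_errDist (hC : C.Nonempty) (u : ι → β) :
    ∃ c ∈ C, hammingDist u c = errDist C u :=
  Nat.sInf_mem (hC.image (hammingDist u))

theorem covRad_eq_of_forall_le_of_exists (hle : ∀ u, errDist C u ≤ n)
    (hex : ∃ u, errDist C u = n) : covRad C = n :=
  IsGreatest.csSup_eq ⟨hex, by rintro _ ⟨u, rfl⟩; exact hle u⟩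

end ErrDist

namespace Polynomial

variable {F : Type*} [Field F]

theorem card_sub_natDegree_sub_le_hammingDist [Fintype F] [DecidableEq F] {f g : F[X]}
    (hfg : f ≠ g) :
    Fintype.card F - (f - g).natDegree ≤ hammingDist (fun a => f.eval a) (fun a => g.eval a) := by
  have hagree : #{a | f.eval a = g.eval a} ≤ (f - g).natDegree := by
    refine card_le_degree_of_subset_roots fun a ha => ?_
    rw [mem_roots (sub_ne_zero.2 hfg), IsRoot, eval_sub, sub_eq_zero]
    exact (mem_filter.1 ha).2
  have hsplit := card_filter_add_card_filter_not (s := univ) fun a : F => f.eval a = g.eval a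
  rw [card_univ] at hsplit
  rw [hammingDist]
  simp only [ne_eq] at hsplit ⊢
  omega

theorem exists_degree_lt_eval_eq_of_le_card [Fintype F] [DecidableEq F] {k : ℕ}
    (hk : k ≤ Fintype.card F) (u : F → F) :
    ∃ (h : F[X]) (T : Finset F), h.degree < k ∧ #T = k ∧ ∀ a ∈ T, h.eval a = u a := by
  obtain ⟨T, -, hT⟩ := exists_subset_card_eq (s := (univ : Finset F)) (n := k) (by rwa [card_univ])
  have hinj : Set.InjOn (id : F → F) T := Set.injOn_id _
  exact ⟨Lagrange.interpolate T id u, T, hT ▸ Lagrange.degree_interpolate_lt u hinj, hT,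
    fun a ha => Lagrange.eval_interpolate_at_node u hinj ha⟩

/-- The witness is `f - lc(f) ∏_{t ∈ T} (X - t)`. -/
theorem exists_degree_lt_coeff_eq_eval_eq {f : F[X]} {k : ℕ} (hk : 0 < k)
    (hf : f.natDegree = k) {T : Finset F} (hT : #T = k) :
    ∃ g : F[X], g.degree < k ∧ g.coeff (k - 1) = f.coeff (k - 1) + f.leadingCoeff * ∑ t ∈ T, t ∧
      ∀ t ∈ T, g.eval t = f.eval t := by
  have hf0 : f ≠ 0 := by rintro rfl; rw [natDegree_zero] at hf; omega
  set P : F[X] := ∏ t ∈ T, (X - C t)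
  have hP : P.Monic := monic_prod_of_monic _ _ fun t _ => monic_X_sub_C t
  have hPdeg : P.natDegree = k := by
    rw [natDegree_prod_of_monic _ _ fun t _ => monic_X_sub_C t]
    simp [hT]
  have hPcoeff : P.coeff (k - 1) = -∑ t ∈ T, t := hT ▸ prod_X_sub_C_coeff_card_pred T id (hT ▸ hk)
  have hdegf : f.degree = k := (degree_eq_iff_natDegree_eq_of_pos hk).2 hf
  refine ⟨f - C f.leadingCoeff * P, ?_, ?_, fun t ht => ?_⟩
  · have hdeg : (C f.leadingCoeff * P).degree = k := by
      rw [degree_C_mul (leadingCoeff_ne_zero.2 hf0), degree_eq_natDegree hP.ne_zero, hPdeg]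
    have hlc : (C f.leadingCoeff * P).leadingCoeff = f.leadingCoeff := by
      rw [leadingCoeff_mul, leadingCoeff_C, hP.leadingCoeff, mul_one]
    exact hdegf ▸ degree_sub_lt_left (hdegf.trans hdeg.symm) hf0 hlc.symm
  · rw [coeff_sub, coeff_C_mul, hPcoeff]
    ring
  · have hPt : P.eval t = 0 := by
      rw [eval_prod]
      exact prod_eq_zero ht (by simp)
    rw [eval_sub, eval_mul, hPt, mul_zero, sub_zero]

end Polynomial

section Codes

variable {F : Type*} [Field F] {k : ℕ}

def prsEncode (k : ℕ) (g : F[X]) : Option F → F :=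
  fun o => o.elim (g.coeff (k - 1)) fun a => g.eval a

theorem prsEncode_mem_PRSCode {g : F[X]} (hg : g.degree < k) : prsEncode k g ∈ PRSCode F k :=
  ⟨g, hg, fun _ => rfl, rfl⟩

theorem PRSCode_nonempty : (PRSCode F k).Nonempty :=
  ⟨_, prsEncode_mem_PRSCode (g := 0) (by simp)⟩

theorem RSCode_nonempty {ι : Type*} (x : ι → F) : (RSCode F x k).Nonempty :=
  ⟨fun _ => 0, 0, by simp, fun _ => by simp⟩

/-- The deep hole conjecture for `RS(q,k)`, whose covering radius is `q - k`. -/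
def RSDeepHoleConj (F : Type*) [Field F] [Fintype F] [DecidableEq F] (k : ℕ) : Prop :=
  ∀ f : F[X], k ≤ f.natDegree → f.natDegree ≤ Fintype.card F - 1 →
    errDist (RSCode F (id : F → F) k) (fun a => f.eval a) = Fintype.card F - k →
      f.natDegree = k

variable [Fintype F] [DecidableEq F]

theorem errDist_RSCode_le (hk : k ≤ Fintype.card F) (u : F → F) :
    errDist (RSCode F id k) u ≤ Fintype.card F - k := by
  obtain ⟨h, T, hh, hT, hhT⟩ := exists_degree_lt_eval_eq_of_le_card hk u
  calc errDist (RSCode F id k) u ≤ hammingDist u (fun a => h.eval a) :=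
        errDist_le_hammingDist ⟨h, hh, fun _ => rfl⟩
    _ ≤ Fintype.card F - #T := hammingDist_le_card_sub_card_of_eqOn fun a ha => (hhT a ha).symm
    _ = Fintype.card F - k := by rw [hT]

theorem errDist_PRSCode_le_errDist_RSCode_add_one (w : Option F → F) :
    errDist (PRSCode F k) w ≤ errDist (RSCode F id k) (w ∘ some) + 1 := by
  obtain ⟨c, ⟨g, hg, hgc⟩, hc⟩ :=
    exists_hammingDist_eq_errDist (RSCode_nonempty (k := k) id) (w ∘ some)
  obtain rfl : c = fun a => g.eval a := funext hgc
  calc errDist _ w ≤ hammingDist w (prsEncode k g) :=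
        errDist_le_hammingDist (prsEncode_mem_PRSCode hg)
    _ ≤ hammingDist (w ∘ some) (fun a => g.eval a) + 1 :=
        (hammingDist_option w _).trans_le (add_le_add le_rfl (by split_ifs <;> simp))
    _ = _ := by rw [← hc]

theorem card_sub_le_errDist_PRSCode {f : F[X]} (hf : f.degree = k) (v : F) :
    Fintype.card F - k ≤ errDist (PRSCode F k) (fun o => o.elim v fun a => f.eval a) := by
  refine le_errDist PRSCode_nonempty ?_
  rintro c ⟨g, hg, hgc, -⟩
  have hfg : f ≠ g := by rintro rfl; exact hg.ne hf
  have hdeg : (f - g).natDegree ≤ k := (natDegree_sub_le f g).trans <|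
    max_le (natDegree_le_of_degree_le hf.le) (natDegree_le_of_degree_le hg.le)
  calc Fintype.card F - k ≤ Fintype.card F - (f - g).natDegree := by omega
    _ ≤ hammingDist (fun a => f.eval a) (fun a => g.eval a) :=
        card_sub_natDegree_sub_le_hammingDist hfg
    _ = hammingDist (fun a => f.eval a) (c ∘ some) := by rw [← funext hgc]; rfl
    _ ≤ _ := (Nat.le_add_right _ _).trans_eq
        (hammingDist_option (fun o => o.elim v fun a => f.eval a) c).symm

theorem errDist_PRSCode_le_of_natDegree_eq (h2 : (2 : F) ≠ 0) (hk2 : 2 ≤ k)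
    (hk : k ≤ Fintype.card F - 2) {f : F[X]} (hf : f.natDegree = k) (v : F) :
    errDist (PRSCode F k) (fun o => o.elim v fun a => f.eval a) ≤ Fintype.card F - k := by
  have hlc : f.leadingCoeff ≠ 0 := leadingCoeff_ne_zero.2 (by rintro rfl; simp at hf; omega)
  obtain ⟨T, hT, hTs⟩ :=
    exists_finset_card_eq_sum_eq h2 hk2 hk ((v - f.coeff (k - 1)) / f.leadingCoeff)
  obtain ⟨g, hg, hgv, hgT⟩ := exists_degree_lt_coeff_eq_eval_eq (by omega) hf hT
  rw [hTs, mul_div_cancel₀ _ hlc, add_sub_cancel] at hgv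
  calc errDist _ _ ≤ hammingDist _ (prsEncode k g) :=
        errDist_le_hammingDist (prsEncode_mem_PRSCode hg)
    _ = hammingDist (fun a => f.eval a) (fun a => g.eval a) := by
        rw [hammingDist_option]; simp [prsEncode, hgv, Function.comp_def]
    _ ≤ Fintype.card F - #T := hammingDist_le_card_sub_card_of_eqOn fun t ht => (hgT t ht).symm
    _ = Fintype.card F - k := by rw [hT]

theorem errDist_PRSCode_of_natDegree_eq (h2 : (2 : F) ≠ 0) (hk2 : 2 ≤ k)
    (hk : k ≤ Fintype.card F - 2) {f : F[X]} (hf : f.natDegree = k) (v : F) :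
    errDist (PRSCode F k) (fun o => o.elim v fun a => f.eval a) = Fintype.card F - k :=
  (errDist_PRSCode_le_of_natDegree_eq h2 hk2 hk hf v).antisymm <|
    card_sub_le_errDist_PRSCode ((degree_eq_iff_natDegree_eq_of_pos (by omega)).2 hf) v

theorem errDist_PRSCode_le_of_RSDeepHoleConj (h2 : (2 : F) ≠ 0) (hk2 : 2 ≤ k)
    (hk : k ≤ Fintype.card F - 2) (conj : RSDeepHoleConj F k) (w : Option F → F) :
    errDist (PRSCode F k) w ≤ Fintype.card F - k := by
  obtain ⟨h, T, hh, hT, hhT⟩ := exists_degree_lt_eval_eq_of_le_card le_rfl (w ∘ some)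
  have hwh : w ∘ some = fun a => h.eval a :=
    funext fun a => (hhT a (by simp [eq_univ_of_card T hT])).symm
  rcases (errDist_RSCode_le (k := k) (by omega) (w ∘ some)).lt_or_eq with hlt | hdeep
  · exact (errDist_PRSCode_le_errDist_RSCode_add_one w).trans (by omega)
  rw [hwh] at hdeep
  have hkh : k ≤ h.natDegree := by
    by_contra! hlt
    have := errDist_eq_zero_of_mem (C := RSCode F id k) (u := fun a => h.eval a)
      ⟨h, degree_le_natDegree.trans_lt (by exact_mod_cast hlt), fun _ => rfl⟩
    omega
  have hhq : h.natDegree < Fintype.card F :=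
    (natDegree_lt_iff_degree_lt (by rintro rfl; simp at hkh; omega)).2 hh
  have hw : w = fun o => o.elim (w none) fun a => h.eval a := by
    funext o
    cases o
    · rfl
    · exact congrFun hwh _
  rw [hw]
  exact (errDist_PRSCode_of_natDegree_eq h2 hk2 hk (conj h hkh (by omega) hdeep) _).le

end Codes

/-- Assuming the deep hole conjecture for `RS(q,k)`, the covering radius of `PRS(q+1,k)`
equals `q - k`, and every word `(u_f, v)` with `deg f = k` is a deep hole of `PRS(q+1,k)`. -/
theorem prs_covRad_of_deephole_conj {F : Type*} [Field F] [Fintype F] [DecidableEq F] {k : ℕ}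
    (hq : Odd (Fintype.card F)) (hk2 : 2 ≤ k) (hk : k ≤ Fintype.card F - 2)
    (conj : ∀ f : F[X], k ≤ f.natDegree → f.natDegree ≤ Fintype.card F - 1 →
      errDist (RSCode F (id : F → F) k) (fun a => f.eval a) = Fintype.card F - k →
        f.natDegree = k) :
    covRad (PRSCode F k) = Fintype.card F - k ∧
      ∀ f : F[X], f.natDegree = k → ∀ v : F,
        errDist (PRSCode F k) (fun o => o.elim v (fun a => f.eval a)) =
          covRad (PRSCode F k) := by
  have h2 : (2 : F) ≠ 0 := Ring.two_ne_zero <|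
    mt FiniteField.even_card_iff_char_two.1 (by rw [Nat.odd_iff] at hq; omega)
  have hcov : covRad (PRSCode F k) = Fintype.card F - k :=
    covRad_eq_of_forall_le_of_exists (errDist_PRSCode_le_of_RSDeepHoleConj h2 hk2 hk conj)
      ⟨_, errDist_PRSCode_of_natDegree_eq h2 hk2 hk (natDegree_X_pow k) 0⟩
  exact ⟨hcov, fun f hf v => hcov ▸ errDist_PRSCode_of_natDegree_eq h2 hk2 hk hf v⟩
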